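/- Let φ be an automorphism of the free group F with finite basis A. For any distinct u, v ∈ F there exist finite sets U, V ⊂ F such that φ(C²_{[u,v]}) is the disjoint union over u_i ∈ U, v_j ∈ V of the double cylinders C²_{[u_i, v_j]}. -/

import Mathlib

open List

variable {A : Type*} [Fintype A] [DecidableEq A]

/-- The formal inverse of a letter in `A ∪ A⁻¹`, encoded as `A × Bool`. -/
def Linv (x : A × Bool) : A × Bool := (x.1, !x.2)

/-- A finite word is reduced if no letter is followed by its inverse. -/
def RedWord (w : List (A × Bool)) : Prop := w.Chain' (fun x y => y ≠ Linv x)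

/-- An infinite word is reduced if no letter is followed by its inverse. -/
def InfRed (X : ℕ → A × Bool) : Prop := ∀ n, X (n + 1) ≠ Linv (X n)

/-- The boundary `∂F(A)`: the set of infinite reduced words. -/
abbrev Bdry (A : Type*) := {X : ℕ → A × Bool // InfRed X}

/-- The prefix of length `n` of an infinite word. -/
def wpre (X : ℕ → A × Bool) (n : ℕ) : List (A × Bool) := (List.range n).map X

/-- The word length `|g|_A` of an element of the free group. -/
def wlen (g : FreeGroup A) : ℕ := (FreeGroup.toWord g).length

/-- The cylinder `C¹_g` for a group element `g`, via its reduced word. -/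
def CylF (g : FreeGroup A) : Set (Bdry A) := {X | wpre X.val (wlen g) = g.toWord}

/-- The cylinder `C¹_l` for a (reduced) word `l`. -/
def CylL (l : List (A × Bool)) : Set (Bdry A) := {X | wpre X.val l.length = l}

/-- `w|_k` : erase the last `k` letters of the word `w`. -/
def del (l : List (A × Bool)) (k : ℕ) : List (A × Bool) := l.take (l.length - k)

/-- `u|^k` : the set of reduced words obtained from `u` by appending `k` letters. -/
def extW (u : List (A × Bool)) (k : ℕ) : Set (List (A × Bool)) :=
  {v | RedWord v ∧ u <+: v ∧ v.length = u.length + k}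

/-- The size `S(φ)`: the maximum of `|φ(a)|` and `|φ⁻¹(a)|` over all `a ∈ A`. -/
def fsize (φ : FreeGroup A ≃* FreeGroup A) : ℕ :=
  Finset.univ.sup fun a : A =>
    max (wlen (φ (FreeGroup.of a))) (wlen (φ.symm (FreeGroup.of a)))

/-- The bounded cancellation constant `C(φ)`: the least `C` with
`|φ(u)| + |φ(v)| ≤ |φ(uv)| + C` for all `u, v`. -/
noncomputable def fcancel (φ : FreeGroup A ≃* FreeGroup A) : ℕ :=
  sInf {C | ∀ u v : FreeGroup A, wlen (φ u) + wlen (φ v) ≤ wlen (φ (u * v)) + C}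

/-- The graph of the continuous extension of `f` to the boundary:
`Y` is the limit of the words `f(X|_m)` as `m → ∞`. -/
def LimMap (f : FreeGroup A → FreeGroup A) (X Y : ℕ → A × Bool) : Prop :=
  ∀ n, ∃ m₀, ∀ m ≥ m₀, ((f (FreeGroup.mk (wpre X m))).toWord.take n) = wpre Y n

/-- The image of a subset of the boundary under the boundary extension of `f`. -/
def bim (f : FreeGroup A → FreeGroup A) (S : Set (Bdry A)) : Set (Bdry A) :=
  {Y | ∃ X ∈ S, LimMap f X.val Y.val}

/-- The length of the longest common prefix of two distinct infinite words. -/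
noncomputable def lcpN (X Y : ℕ → A × Bool) : ℕ := sInf {n | X n ≠ Y n}

/-- The biinfinite geodesic `γ(X,Y)` in the Cayley tree from `X` to `Y` passes
through the vertex `u` and then through the vertex `v` (in that order).
Its vertices are the prefixes of `X` of length `≥ lcpN X Y` (traversed with
decreasing length) followed by the prefixes of `Y` of length `≥ lcpN X Y`
(traversed with increasing length). -/
def Before (X Y : ℕ → A × Bool) (u v : FreeGroup A) : Prop :=
  (∃ i j, lcpN X Y ≤ j ∧ j ≤ i ∧
      u = FreeGroup.mk (wpre X i) ∧ v = FreeGroup.mk (wpre X j)) ∨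
  (∃ i j, lcpN X Y ≤ i ∧ lcpN X Y ≤ j ∧
      u = FreeGroup.mk (wpre X i) ∧ v = FreeGroup.mk (wpre Y j)) ∨
  (∃ i j, lcpN X Y ≤ i ∧ i ≤ j ∧
      u = FreeGroup.mk (wpre Y i) ∧ v = FreeGroup.mk (wpre Y j))

/-- The double cylinder `C²_{[u,v]}` in the double boundary. -/
def DCyl (u v : FreeGroup A) : Set (Bdry A × Bdry A) :=
  {P | P.1.val ≠ P.2.val ∧ Before P.1.val P.2.val u v}

/-! Both `φ` and `φ⁻¹` are quasi-isometries of the Cayley tree, and the image of a geodesic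
under a quasi-isometry of a tree fellow-travels the geodesic between its endpoints. Hence
`∂φ⁻¹` exists, inverts `∂φ`, and the first `n` letters of `∂φ⁻¹ X` only depend on the first
`L n + L²` letters of `X`, where `L = S(φ) + 1`. The double cylinder `C²_{[u,v]}` is the
product `H × H'` of two disjoint clopen half-trees (the ends beyond `u` seen from `v`, and vice
versa), so its image is the product of their preimages under `∂φ⁻¹`, again disjoint and
clopen; such a product is the disjoint union of the `C²_{[x,y]}` over the prefixes `x`, `y`
of a fixed length. -/

open FreeGroup

section Letters

variable {α : Type*}

theorem ne_linv_iff {x y : α × Bool} : y ≠ Linv x ↔ (x.1 = y.1 → x.2 = y.2) := by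
  obtain ⟨a, b⟩ := x
  obtain ⟨c, d⟩ := y
  cases b <;> cases d <;> simp [Linv, eq_comm]

theorem wpre_length (X : ℕ → α × Bool) (n : ℕ) : (wpre X n).length = n := by
  simp [wpre]

theorem take_wpre (X : ℕ → α × Bool) {k m : ℕ} (h : k ≤ m) : (wpre X m).take k = wpre X k := by
  rw [wpre, wpre, ← List.map_take, List.take_range, min_eq_left h]

theorem getElem_wpre (X : ℕ → α × Bool) {i m : ℕ} (h : i < (wpre X m).length) :
    (wpre X m)[i] = X i := by
  simp [wpre]

theorem wpre_eq_wpre_iff {X Y : ℕ → α × Bool} {k : ℕ} :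
    wpre X k = wpre Y k ↔ ∀ i < k, X i = Y i := by
  simp [wpre, List.map_inj_left]

theorem infRed_iff_isReduced_wpre {X : ℕ → α × Bool} :
    InfRed X ↔ ∀ n, FreeGroup.IsReduced (wpre X n) := by
  simp only [InfRed, ne_linv_iff, FreeGroup.IsReduced, wpre, List.isChain_map, List.isChain_range]
  refine ⟨fun h n m _ => h m, fun h n => h (n + 2) n (by omega)⟩

end Letters

section CommonPrefix

variable {α : Type*} [DecidableEq α]

def commonPrefixLength : List α → List α → ℕ
  | x :: xs, y :: ys => if x = y then commonPrefixLength xs ys + 1 else 0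
  | _, _ => 0

theorem le_commonPrefixLength_iff :
    ∀ {p q : List α} {k : ℕ}, k ≤ commonPrefixLength p q ↔ k ≤ p.length ∧ p.take k = q.take k
  | _, _, 0 => by simp
  | [], _, k + 1 => by simp [commonPrefixLength]
  | _ :: _, [], k + 1 => by simp [commonPrefixLength]
  | x :: xs, y :: ys, k + 1 => by
    by_cases hxy : x = y <;> simp [commonPrefixLength, hxy, le_commonPrefixLength_iff]

variable {p q r : List α}

theorem commonPrefixLength_le_length_left : commonPrefixLength p q ≤ p.length :=
  (le_commonPrefixLength_iff.mp le_rfl).1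

theorem take_commonPrefixLength :
    p.take (commonPrefixLength p q) = q.take (commonPrefixLength p q) :=
  (le_commonPrefixLength_iff.mp le_rfl).2

theorem commonPrefixLength_le_length_right : commonPrefixLength p q ≤ q.length := by
  have h := congrArg List.length (take_commonPrefixLength (p := p) (q := q))
  simp only [List.length_take, min_eq_left commonPrefixLength_le_length_left] at h
  omega

theorem commonPrefixLength_self (p : List α) : commonPrefixLength p p = p.length :=
  le_antisymm commonPrefixLength_le_length_left (le_commonPrefixLength_iff.mpr ⟨le_rfl, rfl⟩)

theorem min_le_commonPrefixLength :
    min (commonPrefixLength p q) (commonPrefixLength q r) ≤ commonPrefixLength p r := by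
  set k := min (commonPrefixLength p q) (commonPrefixLength q r)
  obtain ⟨hkp, hpq⟩ := le_commonPrefixLength_iff.mp (min_le_left _ _ : k ≤ _)
  obtain ⟨-, hqr⟩ := le_commonPrefixLength_iff.mp (min_le_right _ _ : k ≤ _)
  exact le_commonPrefixLength_iff.mpr ⟨hkp, hpq.trans hqr⟩

theorem getElem_commonPrefixLength_ne (hp : commonPrefixLength p q < p.length)
    (hq : commonPrefixLength p q < q.length) :
    p[commonPrefixLength p q] ≠ q[commonPrefixLength p q] := by
  intro h
  have : commonPrefixLength p q + 1 ≤ commonPrefixLength p q := by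
    refine le_commonPrefixLength_iff.mpr ⟨hp, ?_⟩
    rw [List.take_add_one, List.take_add_one, take_commonPrefixLength, List.getElem?_eq_getElem hp,
      List.getElem?_eq_getElem hq, h]
  omega

end CommonPrefix

section TreeMetric

variable {α : Type*} [DecidableEq α]

theorem toWord_mk_of_isReduced {w : List (α × Bool)} (hw : FreeGroup.IsReduced w) :
    (mk w).toWord = w := by
  rw [toWord_mk, hw.reduce_eq]

theorem wlen_mk_of_isReduced {w : List (α × Bool)} (hw : FreeGroup.IsReduced w) :
    wlen (mk w) = w.length := by
  rw [wlen, toWord_mk_of_isReduced hw]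

theorem FreeGroup.IsReduced.invRev {w : List (α × Bool)} (hw : FreeGroup.IsReduced w) :
    FreeGroup.IsReduced (invRev w) := by
  have h := isReduced_toWord (x := (mk w)⁻¹)
  rwa [toWord_inv, toWord_mk_of_isReduced hw] at h

theorem isReduced_invRev_append {p q : List (α × Bool)} (hp : FreeGroup.IsReduced p)
    (hq : FreeGroup.IsReduced q) (hpq : ∀ a ∈ p.head?, ∀ b ∈ q.head?, a ≠ b) :
    FreeGroup.IsReduced (invRev p ++ q) := by
  match p, q with
  | [], _ => simpa [invRev] using hq
  | _, [] => simpa using hp.invRev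
  | a :: p', b :: q' =>
    have hjunction : FreeGroup.IsReduced (invRev [a] ++ b :: q') := by
      have := hpq a rfl b rfl
      simp only [invRev, List.map_cons, List.map_nil, List.reverse_singleton, List.cons_append,
        List.nil_append, isReduced_cons_cons]
      exact ⟨by grind, hq⟩
    rw [invRev_cons]
    exact (invRev_cons ▸ hp.invRev).append_overlap hjunction (by simp [invRev])

/-- In the Cayley tree, `|g⁻¹h|` is the length of the path from `g` down to the branch point
of the geodesics `[1, g]` and `[1, h]`, and back up to `h`. -/
theorem wlen_inv_mul_add (g h : FreeGroup α) :
    wlen (g⁻¹ * h) + 2 * commonPrefixLength g.toWord h.toWord = wlen g + wlen h := by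
  set ℓ := commonPrefixLength g.toWord h.toWord
  have hgh : g⁻¹ * h = mk (invRev (g.toWord.drop ℓ) ++ h.toWord.drop ℓ) := by
    have hg : mk (g.toWord.take ℓ) * mk (g.toWord.drop ℓ) = g := by
      rw [mul_mk, List.take_append_drop, mk_toWord]
    have hh : mk (g.toWord.take ℓ) * mk (h.toWord.drop ℓ) = h := by
      rw [mul_mk, take_commonPrefixLength, List.take_append_drop, mk_toWord]
    conv_lhs => rw [← hg, ← hh]
    rw [← mul_mk, ← inv_mk]
    group
  have hred : FreeGroup.IsReduced (invRev (g.toWord.drop ℓ) ++ h.toWord.drop ℓ) := by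
    refine isReduced_invRev_append (isReduced_toWord.infix (List.drop_suffix _ _).isInfix)
      (isReduced_toWord.infix (List.drop_suffix _ _).isInfix) ?_
    simp only [List.head?_drop, Option.mem_def, List.getElem?_eq_some_iff]
    rintro a ⟨hg, rfl⟩ b ⟨hh, rfl⟩
    exact getElem_commonPrefixLength_ne hg hh
  rw [hgh, wlen_mk_of_isReduced hred, List.length_append, invRev_length, List.length_drop,
    List.length_drop, wlen, wlen]
  have := commonPrefixLength_le_length_left (p := g.toWord) (q := h.toWord)
  have := commonPrefixLength_le_length_right (p := g.toWord) (q := h.toWord)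
  omega

end TreeMetric

section Bilipschitz

variable {α : Type*} [DecidableEq α] {F : Type*} [FunLike F (FreeGroup α) (FreeGroup α)]
  {f : F} {L : ℕ}

variable (f L) in
structure IsBilipschitz : Prop where
  pos : 0 < L
  wlen_map_le : ∀ g, wlen (f g) ≤ L * wlen g
  wlen_le_wlen_map : ∀ g, wlen g ≤ L * wlen (f g)

theorem IsBilipschitz.le_length_toWord_map_mk_wpre (hf : IsBilipschitz f L)
    {X : ℕ → α × Bool} (hX : InfRed X) {n m : ℕ} (hm : L * n ≤ m) :
    n ≤ (f (FreeGroup.mk (wpre X m))).toWord.length := by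
  refine Nat.le_of_mul_le_mul_left ?_ hf.pos
  have := hf.wlen_le_wlen_map (FreeGroup.mk (wpre X m))
  rw [wlen_mk_of_isReduced (infRed_iff_isReduced_wpre.mp hX m), wpre_length] at this
  exact hm.trans this

theorem IsBilipschitz.symm {φ : FreeGroup α ≃* FreeGroup α} (hφ : IsBilipschitz φ L) :
    IsBilipschitz φ.symm L :=
  ⟨hφ.pos, fun g => by simpa using hφ.wlen_le_wlen_map (φ.symm g),
    fun g => by simpa using hφ.wlen_map_le (φ.symm g)⟩

end Bilipschitz

section QuasiIsometry

variable {α : Type*} [DecidableEq α] {F : Type*} [FunLike F (FreeGroup α) (FreeGroup α)]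
  [MonoidHomClass F (FreeGroup α) (FreeGroup α)] {f : F} {L : ℕ}

theorem wlen_map_mk_le (hf : ∀ a, wlen (f (of a)) ≤ L) :
    ∀ l : List (α × Bool), wlen (f (mk l)) ≤ L * l.length
  | [] => by simp [← one_eq_mk, wlen]
  | (a, b) :: l => by
    have hletter : wlen (f (mk [(a, b)])) ≤ L := by
      cases b
      · rw [show mk [(a, false)] = (of a)⁻¹ by simp [of, inv_mk, invRev], _root_.map_inv]
        exact norm_inv_eq.trans_le (hf a)
      · exact hf a
    calc wlen (f (mk ((a, b) :: l))) ≤ wlen (f (mk [(a, b)])) + wlen (f (mk l)) := by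
          rw [← List.singleton_append, ← mul_mk, _root_.map_mul]
          exact norm_mul_le _ _
      _ ≤ L * ((a, b) :: l).length := by
          rw [List.length_cons, mul_add_one]
          linarith [wlen_map_mk_le hf l]

theorem wlen_map_le_of_forall_of (hf : ∀ a, wlen (f (of a)) ≤ L) (g : FreeGroup α) :
    wlen (f g) ≤ L * wlen g := by
  have := wlen_map_mk_le hf g.toWord
  rwa [mk_toWord] at this

theorem wlen_add_wlen_le_of_quasiIsometry (hf : ∀ g, wlen (f g) ≤ L * wlen g)
    (hf' : ∀ g, wlen g ≤ L * wlen (f g)) (g h : FreeGroup α) :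
    wlen g + wlen h ≤
      L * (L * wlen (g⁻¹ * h) + 2 * commonPrefixLength (f g).toWord (f h).toWord) :=
  calc wlen g + wlen h ≤ L * wlen (f g) + L * wlen (f h) := add_le_add (hf' g) (hf' h)
    _ = L * (wlen ((f g)⁻¹ * f h) + 2 * commonPrefixLength (f g).toWord (f h).toWord) := by
      rw [wlen_inv_mul_add]; ring
    _ ≤ _ := by
      rw [← _root_.map_inv, ← _root_.map_mul]
      gcongr
      exact hf _

theorem wlen_mk_take {w : List (α × Bool)} (hw : FreeGroup.IsReduced w) {i : ℕ}
    (hi : i ≤ w.length) : wlen (mk (w.take i)) = i := by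
  rw [wlen_mk_of_isReduced (hw.infix (List.take_prefix i w).isInfix), List.length_take,
    min_eq_left hi]

theorem two_mul_le_commonPrefixLength_map_take_succ (hf : ∀ g, wlen (f g) ≤ L * wlen g)
    (hf' : ∀ g, wlen g ≤ L * wlen (f g)) {w : List (α × Bool)} (hw : FreeGroup.IsReduced w)
    {j : ℕ} (hj : j < w.length) :
    2 * j ≤ 2 * L * commonPrefixLength (f (mk (w.take j))).toWord
      (f (mk (w.take (j + 1)))).toWord + L * L := by
  have hstep : (mk (w.take j))⁻¹ * mk (w.take (j + 1)) = mk [w[j]] := by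
    rw [List.take_add_one, List.getElem?_eq_getElem hj, Option.toList_some, ← mul_mk,
      inv_mul_cancel_left]
  have h := wlen_add_wlen_le_of_quasiIsometry hf hf' (mk (w.take j)) (mk (w.take (j + 1)))
  rw [hstep, wlen_mk_take hw hj.le, wlen_mk_take hw hj] at h
  have hletter : wlen (mk [w[j]]) ≤ 1 := norm_mk_le
  nlinarith

/-- The image of the geodesic `w` fellow-travels the geodesic between its endpoints. Since
`(p|r) ≥ min (p|q) (q|r)` for Gromov products in a tree, it suffices to compare consecutive
prefixes of `w`. -/
theorem two_mul_le_commonPrefixLength_map (hf : ∀ g, wlen (f g) ≤ L * wlen g)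
    (hf' : ∀ g, wlen g ≤ L * wlen (f g)) {w : List (α × Bool)} (hw : FreeGroup.IsReduced w)
    {j j' : ℕ} (hjj' : j ≤ j') (hj' : j' ≤ w.length) :
    2 * j ≤ 2 * L * commonPrefixLength (f (mk (w.take j))).toWord
      (f (mk (w.take j'))).toWord + L * L := by
  induction j', hjj' using Nat.le_induction with
  | base =>
    have := hf' (mk (w.take j))
    rw [wlen_mk_take hw hj'] at this
    rw [commonPrefixLength_self]
    exact le_add_right (by unfold wlen at this; linarith)
  | succ j' hjj' ih =>
    have hnext := two_mul_le_commonPrefixLength_map_take_succ hf hf' hw hj'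
    refine le_trans ?_ (Nat.add_le_add_right (Nat.mul_le_mul_left _
      (min_le_commonPrefixLength (q := (f (mk (w.take j'))).toWord))) _)
    rw [← Nat.mul_min_mul_left, ← min_add_add_right]
    exact le_min (ih (by omega)) (hnext.trans' (by omega))

theorem IsBilipschitz.take_toWord_map_mk_take (hf : IsBilipschitz f L) {w : List (α × Bool)}
    (hw : FreeGroup.IsReduced w) {n j : ℕ} (hj : L * n + L * L ≤ j) (hjw : j ≤ w.length) :
    (f (FreeGroup.mk (w.take j))).toWord.take n = (f (FreeGroup.mk w)).toWord.take n := by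
  have h := two_mul_le_commonPrefixLength_map hf.wlen_map_le hf.wlen_le_wlen_map hw hjw le_rfl
  rw [List.take_length] at h
  have hn : n ≤ commonPrefixLength (f (FreeGroup.mk (w.take j))).toWord
      (f (FreeGroup.mk w)).toWord := by
    by_contra! hlt
    nlinarith [hf.pos]
  exact (le_commonPrefixLength_iff.mp hn).2

end QuasiIsometry

section BoundaryExtension

variable {α : Type*} [DecidableEq α] {F : Type*} [FunLike F (FreeGroup α) (FreeGroup α)]
  [MonoidHomClass F (FreeGroup α) (FreeGroup α)] {f : F} {L : ℕ}

/-- The `n`-th letter of `∂f(X)` is read off `f(X|ₘ)` for `m = L(n+1) + L²`, beyond which the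
first `n + 1` letters of `f(X|ₘ)` no longer change; the default `X 0` is never used. -/
def bdryExt (f : F) (L : ℕ) (X : ℕ → α × Bool) : ℕ → α × Bool :=
  fun n => (f (mk (wpre X (L * (n + 1) + L * L)))).toWord.getD n (X 0)

variable {X : ℕ → α × Bool}

theorem bdryExt_apply (hf : IsBilipschitz f L) (hX : InfRed X) {i m : ℕ}
    (hm : L * (i + 1) + L * L ≤ m) (hi : i < (f (mk (wpre X m))).toWord.length) :
    bdryExt f L X i = (f (mk (wpre X m))).toWord[i] := by
  have key := hf.take_toWord_map_mk_take (infRed_iff_isReduced_wpre.mp hX m)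
    (n := i + 1) le_rfl (hm.trans_eq (wpre_length X m).symm)
  rw [take_wpre X hm] at key
  rw [bdryExt, List.getD_eq_getElem?_getD, ← List.getElem?_take_of_lt (Nat.lt_succ_self i), key,
    List.getElem?_take_of_lt (Nat.lt_succ_self i), List.getElem?_eq_getElem hi, Option.getD_some]

theorem wpre_bdryExt (hf : IsBilipschitz f L) (hX : InfRed X) {n m : ℕ}
    (hm : L * n + L * L ≤ m) :
    wpre (bdryExt f L X) n = (f (mk (wpre X m))).toWord.take n := by
  have hlen := hf.le_length_toWord_map_mk_wpre hX (le_of_add_le_left hm)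
  refine List.ext_getElem (by simp [wpre_length, hlen]) fun i hi _ => ?_
  rw [wpre_length] at hi
  rw [getElem_wpre, List.getElem_take, bdryExt_apply hf hX (m := m)
    ((Nat.add_le_add_right (Nat.mul_le_mul_left L hi) _).trans hm) (by omega)]

theorem infRed_bdryExt (hf : IsBilipschitz f L) (hX : InfRed X) : InfRed (bdryExt f L X) :=
  infRed_iff_isReduced_wpre.mpr fun n => by
    rw [wpre_bdryExt hf hX le_rfl]
    exact isReduced_toWord.infix (List.take_prefix _ _).isInfix

theorem limMap_bdryExt (hf : IsBilipschitz f L) (hX : InfRed X) : LimMap f X (bdryExt f L X) :=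
  fun n => ⟨L * n + L * L, fun _ hm => (wpre_bdryExt hf hX hm).symm⟩

end BoundaryExtension

theorem LimMap.unique {α : Type*} [DecidableEq α] {f : FreeGroup α → FreeGroup α}
    {X Y Y' : ℕ → α × Bool} (h : LimMap f X Y) (h' : LimMap f X Y') : Y = Y' := by
  funext n
  obtain ⟨m, hm⟩ := h (n + 1)
  obtain ⟨m', hm'⟩ := h' (n + 1)
  have : wpre Y (n + 1) = wpre Y' (n + 1) := by
    rw [← hm (max m m') (le_max_left _ _), ← hm' (max m m') (le_max_right _ _)]
  exact wpre_eq_wpre_iff.mp this n n.lt_succ_self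

theorem LimMap.symm {α : Type*} [DecidableEq α] {φ : FreeGroup α ≃* FreeGroup α} {L : ℕ}
    (hφ : IsBilipschitz φ L) {X Y : ℕ → α × Bool} (hX : InfRed X) (h : LimMap φ X Y) :
    LimMap φ.symm Y X := by
  intro n
  refine ⟨L * n + L * L, fun k hk => ?_⟩
  obtain ⟨m₁, hm₁⟩ := h k
  set m := max m₁ (max (L * k) n)
  have key := hφ.symm.take_toWord_map_mk_take isReduced_toWord hk
    (hφ.le_length_toWord_map_mk_wpre hX (m := m) ((le_max_left _ _).trans (le_max_right _ _)))
  rwa [hm₁ m (le_max_left _ _), mk_toWord, MulEquiv.symm_apply_apply,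
    toWord_mk_of_isReduced (infRed_iff_isReduced_wpre.mp hX m),
    take_wpre X ((le_max_right _ _).trans (le_max_right _ _))] at key

section Automorphism

variable {α : Type*} [DecidableEq α] [Fintype α] (φ : FreeGroup α ≃* FreeGroup α)

theorem max_wlen_le_fsize (a : α) :
    max (wlen (φ (of a))) (wlen (φ.symm (of a))) ≤ fsize φ :=
  Finset.le_sup (f := fun a => max (wlen (φ (of a))) (wlen (φ.symm (of a)))) (Finset.mem_univ a)

theorem isBilipschitz_of_fsize_lt {L : ℕ} (hL : fsize φ < L) : IsBilipschitz φ L where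
  pos := by omega
  wlen_map_le := wlen_map_le_of_forall_of fun a =>
    ((le_max_left _ _).trans (max_wlen_le_fsize φ a)).trans hL.le
  wlen_le_wlen_map g := by
    simpa using wlen_map_le_of_forall_of (f := φ.symm)
      (fun a => ((le_max_right _ _).trans (max_wlen_le_fsize φ a)).trans hL.le) (φ g)

def bdryAut (X : Bdry α) : Bdry α :=
  ⟨bdryExt φ (fsize φ + 1) X.val,
    infRed_bdryExt (isBilipschitz_of_fsize_lt φ (Nat.lt_succ_self _)) X.2⟩

theorem wpre_bdryAut (X : Bdry α) {n m : ℕ}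
    (hm : (fsize φ + 1) * n + (fsize φ + 1) * (fsize φ + 1) ≤ m) :
    wpre (bdryAut φ X).val n = (φ (mk (wpre X.val m))).toWord.take n :=
  wpre_bdryExt (isBilipschitz_of_fsize_lt φ (Nat.lt_succ_self _)) X.2 hm

theorem limMap_iff_eq_bdryAut_symm {Q P : Bdry α} :
    LimMap φ Q.val P.val ↔ Q = bdryAut φ.symm P := by
  have hφ := isBilipschitz_of_fsize_lt φ (Nat.lt_succ_self _)
  have hφ' := isBilipschitz_of_fsize_lt φ.symm (Nat.lt_succ_self _)
  have hsymm : LimMap φ.symm P.val (bdryAut φ.symm P).val := limMap_bdryExt hφ' P.2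
  constructor
  · exact fun h => Subtype.ext ((h.symm hφ Q.2).unique hsymm)
  · rintro rfl
    simpa using hsymm.symm hφ' P.2

end Automorphism

section Cylinders

variable {α : Type*}

theorem wpre_prefix_wpre (X : ℕ → α × Bool) {k m : ℕ} (h : k ≤ m) : wpre X k <+: wpre X m :=
  take_wpre X h ▸ List.take_prefix k (wpre X m)

theorem mem_cylL_of_prefix {Z : Bdry α} {w w' : List (α × Bool)} (hZ : Z ∈ CylL w)
    (h : w' <+: w) : Z ∈ CylL w' := by
  change wpre Z.val w'.length = w'
  rw [← take_wpre Z.val h.length_le, hZ, ← List.prefix_iff_eq_take.mp h]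

theorem prefix_or_prefix_of_mem_cylL {Z : Bdry α} {w w' : List (α × Bool)} (h : Z ∈ CylL w)
    (h' : Z ∈ CylL w') : w <+: w' ∨ w' <+: w := by
  have hw := wpre_prefix_wpre Z.val (Nat.le_max_left w.length w'.length)
  have hw' := wpre_prefix_wpre Z.val (Nat.le_max_right w.length w'.length)
  rw [show wpre Z.val w.length = w from h] at hw
  rw [show wpre Z.val w'.length = w' from h'] at hw'
  exact List.prefix_or_prefix_of_prefix hw hw'

theorem lcpN_comm (X Y : ℕ → α × Bool) : lcpN X Y = lcpN Y X := by
  simp only [lcpN, ne_comm]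

theorem le_lcpN_iff {X Y : ℕ → α × Bool} (h : X ≠ Y) {k : ℕ} :
    k ≤ lcpN X Y ↔ wpre X k = wpre Y k := by
  rw [wpre_eq_wpre_iff, lcpN,
    le_csInf_iff (s := {n | X n ≠ Y n}) (OrderBot.bddBelow _) (Function.ne_iff.mp h)]
  exact ⟨fun hk i hi => by_contra fun hne => absurd (hk i hne) (by omega),
    fun hk i hne => by_contra fun hi => hne (hk i (by omega))⟩

theorem mem_cylL_iff_length_le_lcpN {X Y : Bdry α} (h : X.val ≠ Y.val)
    {w : List (α × Bool)} (hX : X ∈ CylL w) : Y ∈ CylL w ↔ w.length ≤ lcpN X.val Y.val := by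
  rw [le_lcpN_iff h]
  exact ⟨fun hY => hX.trans hY.symm, fun hXY => hXY.symm.trans hX⟩

end Cylinders

section PrefixDetermined

variable {α : Type*}

/-- The clopen subsets of `∂F` are the sets that are `PrefixDetermined n` for some `n`. -/
def PrefixDetermined (n : ℕ) (S : Set (Bdry α)) : Prop :=
  ∀ ⦃X Y : Bdry α⦄, wpre X.val n = wpre Y.val n → X ∈ S → Y ∈ S

variable {n : ℕ} {S : Set (Bdry α)}

theorem PrefixDetermined.mono (h : PrefixDetermined n S) {m : ℕ} (hnm : n ≤ m) :
    PrefixDetermined m S := fun X Y hXY =>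
  h (by rw [← take_wpre X.val hnm, hXY, take_wpre Y.val hnm])

theorem PrefixDetermined.compl (h : PrefixDetermined n S) : PrefixDetermined n Sᶜ :=
  fun _ _ hXY hX hY => hX (h hXY.symm hY)

theorem prefixDetermined_cylL (w : List (α × Bool)) : PrefixDetermined w.length (CylL w) :=
  fun _ _ hXY hX => hXY.symm.trans hX

theorem PrefixDetermined.preimage_bdryAut [DecidableEq α] [Fintype α]
    (φ : FreeGroup α ≃* FreeGroup α) (h : PrefixDetermined n S) :
    PrefixDetermined ((fsize φ + 1) * n + (fsize φ + 1) * (fsize φ + 1)) (bdryAut φ ⁻¹' S) :=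
  fun X Y hXY hX => h (by rw [wpre_bdryAut φ X le_rfl, wpre_bdryAut φ Y le_rfl, hXY]) hX

end PrefixDetermined

section DoubleCylinders

variable {α : Type*} [DecidableEq α] {u v : FreeGroup α}

theorem eq_mk_wpre_iff (X : Bdry α) {i : ℕ} : u = mk (wpre X.val i) ↔ i = wlen u ∧ X ∈ CylF u := by
  constructor
  · rintro rfl
    have h := toWord_mk_of_isReduced (infRed_iff_isReduced_wpre.mp X.2 i)
    refine ⟨?_, ?_⟩
    · rw [wlen, h, wpre_length]
    · change wpre X.val (wlen _) = _
      rw [wlen, h, wpre_length]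
  · rintro ⟨rfl, h⟩
    rw [show wpre X.val (wlen u) = u.toWord from h, mk_toWord]

theorem before_iff (X Y : Bdry α) (u v : FreeGroup α) :
    Before X.val Y.val u v ↔
      (X ∈ CylF u ∧ X ∈ CylF v ∧ lcpN X.val Y.val ≤ wlen v ∧ wlen v ≤ wlen u) ∨
      (X ∈ CylF u ∧ Y ∈ CylF v ∧ lcpN X.val Y.val ≤ wlen u ∧ lcpN X.val Y.val ≤ wlen v) ∨
      (Y ∈ CylF u ∧ Y ∈ CylF v ∧ lcpN X.val Y.val ≤ wlen u ∧ wlen u ≤ wlen v) := by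
  simp only [Before, eq_mk_wpre_iff X, eq_mk_wpre_iff Y]
  constructor
  · rintro (⟨_, _, hj, hji, ⟨rfl, hu⟩, rfl, hv⟩ | ⟨_, _, hi, hj, ⟨rfl, hu⟩, rfl, hv⟩ |
      ⟨_, _, hi, hij, ⟨rfl, hu⟩, rfl, hv⟩)
    exacts [Or.inl ⟨hu, hv, hj, hji⟩, Or.inr (Or.inl ⟨hu, hv, hi, hj⟩),
      Or.inr (Or.inr ⟨hu, hv, hi, hij⟩)]
  · rintro (⟨hu, hv, hj, hji⟩ | ⟨hu, hv, hi, hj⟩ | ⟨hu, hv, hi, hij⟩)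
    exacts [Or.inl ⟨_, _, hj, hji, ⟨rfl, hu⟩, rfl, hv⟩,
      Or.inr (Or.inl ⟨_, _, hi, hj, ⟨rfl, hu⟩, rfl, hv⟩),
      Or.inr (Or.inr ⟨_, _, hi, hij, ⟨rfl, hu⟩, rfl, hv⟩)]

theorem mem_dcyl_swap {X Y : Bdry α} : (X, Y) ∈ DCyl u v ↔ (Y, X) ∈ DCyl v u := by
  simp only [DCyl, Set.mem_ofPred_eq, before_iff, lcpN_comm Y.val X.val, ne_comm]
  tauto

theorem dcyl_eq_of_not_prefix (h : ¬ u.toWord <+: v.toWord) (h' : ¬ v.toWord <+: u.toWord) :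
    DCyl u v = CylF u ×ˢ CylF v := by
  ext ⟨X, Y⟩
  simp only [DCyl, Set.mem_ofPred_eq, before_iff, Set.mem_prod]
  constructor
  · rintro ⟨-, ⟨hu, hv, -⟩ | ⟨hu, hv, -⟩ | ⟨hu, hv, -⟩⟩
    · exact (prefix_or_prefix_of_mem_cylL hu hv).elim h h' |>.elim
    · exact ⟨hu, hv⟩
    · exact (prefix_or_prefix_of_mem_cylL hu hv).elim h h' |>.elim
  · rintro ⟨hu, hv⟩
    have hXY : X.val ≠ Y.val := fun hXY =>
      (prefix_or_prefix_of_mem_cylL (Subtype.ext hXY ▸ hu) hv).elim h h'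
    refine ⟨hXY, Or.inr (Or.inl ⟨hu, hv, ?_, ?_⟩)⟩
    · by_contra! hlt
      have hYu := (mem_cylL_iff_length_le_lcpN hXY hu).mpr hlt.le
      exact (prefix_or_prefix_of_mem_cylL hYu hv).elim h h'
    · by_contra! hlt
      have hXv := (mem_cylL_iff_length_le_lcpN hXY.symm hv).mpr (lcpN_comm X.val Y.val ▸ hlt.le)
      exact (prefix_or_prefix_of_mem_cylL hu hXv).elim h h'

theorem dcyl_eq_of_prefix (h : u.toWord <+: v.toWord) (huv : u ≠ v) :
    DCyl u v = (CylL (v.toWord.take (wlen u + 1)))ᶜ ×ˢ CylF v := by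
  have hlt : wlen u < wlen v :=
    lt_of_le_of_ne h.length_le fun hlen => huv (toWord_injective (h.eq_of_length hlen))
  set w := v.toWord.take (wlen u + 1)
  have hw : w.length = wlen u + 1 := by
    simp only [w, List.length_take]
    exact min_eq_left hlt
  have hwv : w <+: v.toWord := List.take_prefix _ _
  have huw : u.toWord <+: w := List.prefix_take_iff.mpr ⟨h, Nat.le_succ _⟩
  ext ⟨X, Y⟩
  simp only [DCyl, Set.mem_ofPred_eq, before_iff, Set.mem_prod, Set.mem_compl_iff]
  constructor
  · rintro ⟨hXY, ⟨-, -, -, hvu⟩ | ⟨-, hv, hn, -⟩ | ⟨-, hv, hn, -⟩⟩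
    · omega
    all_goals
      refine ⟨fun hXw => ?_, hv⟩
      have := (mem_cylL_iff_length_le_lcpN hXY hXw).mp (mem_cylL_of_prefix hv hwv)
      omega
  · rintro ⟨hXw, hv⟩
    have hYw := mem_cylL_of_prefix hv hwv
    have hXY : X.val ≠ Y.val := fun hXY => hXw (Subtype.ext hXY ▸ hYw)
    have hn : lcpN X.val Y.val < wlen u + 1 := by
      by_contra! hle
      exact hXw ((mem_cylL_iff_length_le_lcpN hXY.symm hYw).mpr (lcpN_comm X.val Y.val ▸ hw ▸ hle))
    exact ⟨hXY, Or.inr (Or.inr ⟨mem_cylL_of_prefix hYw huw, hv, by omega, hlt.le⟩)⟩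

/-- The ends `X` such that the ray from `v` to `X` passes through `u`. -/
def beyond (u v : FreeGroup α) : Set (Bdry α) :=
  if u.toWord <+: v.toWord then (CylL (v.toWord.take (wlen u + 1)))ᶜ else CylF u

theorem dcyl_eq_prod_beyond (huv : u ≠ v) : DCyl u v = beyond u v ×ˢ beyond v u := by
  by_cases h : u.toWord <+: v.toWord
  · have h' : ¬ v.toWord <+: u.toWord := fun h' =>
      huv (toWord_injective (h.eq_of_length (h.length_le.antisymm h'.length_le)))
    rw [beyond, beyond, if_pos h, if_neg h']
    exact dcyl_eq_of_prefix h huv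
  by_cases h' : v.toWord <+: u.toWord
  · rw [beyond, beyond, if_neg h, if_pos h']
    ext ⟨X, Y⟩
    rw [mem_dcyl_swap, dcyl_eq_of_prefix h' huv.symm]
    exact and_comm
  · rw [beyond, beyond, if_neg h, if_neg h']
    exact dcyl_eq_of_not_prefix h h'

theorem disjoint_beyond (huv : u ≠ v) : Disjoint (beyond u v) (beyond v u) := by
  refine Set.disjoint_left.mpr fun Z hu hv => ?_
  have hZ : (Z, Z) ∈ DCyl u v := by
    rw [dcyl_eq_prod_beyond huv]
    exact ⟨hu, hv⟩
  exact hZ.1 rfl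

theorem prefixDetermined_beyond (u v : FreeGroup α) :
    PrefixDetermined (max (wlen u) (wlen v)) (beyond u v) := by
  unfold beyond
  split_ifs
  · exact (prefixDetermined_cylL _).compl.mono ((List.length_take_le' _ _).trans (le_max_right _ _))
  · exact (prefixDetermined_cylL u.toWord).mono (le_max_left _ _)

theorem cylF_mk {w : List (α × Bool)} (hw : FreeGroup.IsReduced w) : CylF (mk w) = CylL w := by
  simp only [CylF, CylL, wlen, toWord_mk_of_isReduced hw]

theorem dcyl_mk_eq_prod {x y : List (α × Bool)} (hx : FreeGroup.IsReduced x)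
    (hy : FreeGroup.IsReduced y) (hlen : x.length = y.length) (hne : x ≠ y) :
    DCyl (mk x) (mk y) = CylL x ×ˢ CylL y := by
  rw [dcyl_eq_of_not_prefix, cylF_mk hx, cylF_mk hy]
  · rw [toWord_mk_of_isReduced hx, toWord_mk_of_isReduced hy]
    exact fun h => hne (h.eq_of_length hlen)
  · rw [toWord_mk_of_isReduced hx, toWord_mk_of_isReduced hy]
    exact fun h => hne (h.eq_of_length hlen.symm).symm

end DoubleCylinders

/-- The double cylinders are the `C²_{[x, y]}` with `x`, `y` the length-`n` prefixes of points
of `S` and `T`. -/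
theorem exists_prod_eq_iUnion_dcyl {α : Type*} [DecidableEq α] [Fintype α] {n : ℕ}
    {S T : Set (Bdry α)} (hS : PrefixDetermined n S) (hT : PrefixDetermined n T)
    (hST : Disjoint S T) :
    ∃ U V : Finset (FreeGroup α), (S ×ˢ T = ⋃ ui ∈ U, ⋃ vj ∈ V, DCyl ui vj) ∧
      (∀ ui ∈ U, ∀ vj ∈ V, ∀ ui' ∈ U, ∀ vj' ∈ V, (ui, vj) ≠ (ui', vj') →
        DCyl ui vj ∩ DCyl ui' vj' = ∅) := by
  let pre : Bdry α → FreeGroup α := fun Z => mk (wpre Z.val n)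
  have hfin : ∀ R : Set (Bdry α), (pre '' R).Finite := fun R =>
    ((List.finite_length_le _ n).image mk).subset <| by
      rintro _ ⟨Z, -, rfl⟩
      exact ⟨_, (wpre_length _ _).le, rfl⟩
  have hdcyl : ∀ X ∈ S, ∀ Y ∈ T, DCyl (pre X) (pre Y) =
      {P | wpre P.1.val n = wpre X.val n ∧ wpre P.2.val n = wpre Y.val n} := by
    intro X hX Y hY
    rw [dcyl_mk_eq_prod (infRed_iff_isReduced_wpre.mp X.2 n) (infRed_iff_isReduced_wpre.mp Y.2 n)
      (by rw [wpre_length, wpre_length]) fun h => Set.disjoint_left.mp hST (hS h hX) hY]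
    ext P
    simp only [Set.mem_prod, CylL, Set.mem_ofPred_eq, wpre_length]
  refine ⟨(hfin S).toFinset, (hfin T).toFinset, ?_, ?_⟩
  · ext ⟨X, Y⟩
    simp only [Set.Finite.mem_toFinset, Set.mem_iUnion, Set.mem_image, exists_prop, Set.mem_prod]
    constructor
    · rintro ⟨hX, hY⟩
      refine ⟨_, ⟨X, hX, rfl⟩, _, ⟨Y, hY, rfl⟩, ?_⟩
      rw [hdcyl X hX Y hY]
      exact ⟨rfl, rfl⟩
    · rintro ⟨_, ⟨X', hX', rfl⟩, _, ⟨Y', hY', rfl⟩, hP⟩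
      rw [hdcyl X' hX' Y' hY'] at hP
      exact ⟨hS hP.1.symm hX', hT hP.2.symm hY'⟩
  · simp only [Set.Finite.mem_toFinset]
    rintro _ ⟨X, hX, rfl⟩ _ ⟨Y, hY, rfl⟩ _ ⟨X', hX', rfl⟩ _ ⟨Y', hY', rfl⟩ hne
    refine Set.eq_empty_iff_forall_notMem.mpr fun P ⟨hP, hP'⟩ => hne ?_
    rw [hdcyl X hX Y hY] at hP
    rw [hdcyl X' hX' Y' hY'] at hP'
    exact Prod.ext (congrArg mk (hP.1.symm.trans hP'.1)) (congrArg mk (hP.2.symm.trans hP'.2))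

theorem image_double_cylinder_general
    (φ : FreeGroup A ≃* FreeGroup A) (u v : FreeGroup A) (huv : u ≠ v) :
    ∃ U V : Finset (FreeGroup A),
      ({P : Bdry A × Bdry A | ∃ Q ∈ DCyl u v,
          LimMap (fun g => φ g) Q.1.val P.1.val ∧
          LimMap (fun g => φ g) Q.2.val P.2.val} =
        ⋃ ui ∈ U, ⋃ vj ∈ V, DCyl ui vj) ∧
      (∀ ui ∈ U, ∀ vj ∈ V, ∀ ui' ∈ U, ∀ vj' ∈ V, (ui, vj) ≠ (ui', vj') →
        DCyl ui vj ∩ DCyl ui' vj' = ∅) := by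
  have himage : {P : Bdry A × Bdry A | ∃ Q ∈ DCyl u v,
      LimMap (fun g => φ g) Q.1.val P.1.val ∧ LimMap (fun g => φ g) Q.2.val P.2.val} =
      (bdryAut φ.symm ⁻¹' beyond u v) ×ˢ (bdryAut φ.symm ⁻¹' beyond v u) := by
    ext P
    simp only [Set.mem_ofPred_eq, limMap_iff_eq_bdryAut_symm, dcyl_eq_prod_beyond huv]
    constructor
    · rintro ⟨⟨_, _⟩, hQ, rfl, rfl⟩
      exact hQ
    · exact fun hP => ⟨(_, _), hP, rfl, rfl⟩
  rw [himage]
  refine exists_prod_eq_iUnion_dcyl ((prefixDetermined_beyond u v).preimage_bdryAut φ.symm) ?_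
    ((disjoint_beyond huv).preimage _)
  rw [max_comm]
  exact (prefixDetermined_beyond v u).preimage_bdryAut φ.symm

theorem image_double_cylinder (hA : 2 ≤ Fintype.card A)
    (φ : FreeGroup A ≃* FreeGroup A) (u v : FreeGroup A) (huv : u ≠ v) :
    ∃ U V : Finset (FreeGroup A),
      ({P : Bdry A × Bdry A | ∃ Q ∈ DCyl u v,
          LimMap (fun g => φ g) Q.1.val P.1.val ∧
          LimMap (fun g => φ g) Q.2.val P.2.val} =
        ⋃ ui ∈ U, ⋃ vj ∈ V, DCyl ui vj) ∧
      (∀ ui ∈ U, ∀ vj ∈ V, ∀ ui' ∈ U, ∀ vj' ∈ V, (ui, vj) ≠ (ui', vj') →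
        DCyl ui vj ∩ DCyl ui' vj' = ∅) :=
  image_double_cylinder_general φ u v huv
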